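/- Let κ > 0, R > 0, and let u : ℝ×ℝ² → S² be a smooth solution of the Landau–Lifshitz equation in stereographic coordinates, ∂_t u = u × ( λ(x)⁻² Δu + κ (u·Φ) Φ ), such that u(t,x) = Φ(x) whenever |x| ≥ R. Then the topological charge is conserved: t ↦ Q(u(t,·)) = (1/4π)∫_{ℝ²} ω(u(t,·)) dx is constant. -/

import Mathlib

open MeasureTheory Filter

noncomputable section

/-- Euclidean dot product on `Fin 3 → ℝ`. -/
def dot3 (a b : Fin 3 → ℝ) : ℝ := a 0 * b 0 + a 1 * b 1 + a 2 * b 2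

/-- Cross product on `Fin 3 → ℝ`. -/
def cross3 (a b : Fin 3 → ℝ) : Fin 3 → ℝ :=
  ![a 1 * b 2 - a 2 * b 1, a 2 * b 0 - a 0 * b 2, a 0 * b 1 - a 1 * b 0]

/-- Euclidean norm on `Fin 3 → ℝ`. -/
def enorm3 (v : Fin 3 → ℝ) : ℝ := Real.sqrt (dot3 v v)

/-- Third standard basis vector `e₃`. -/
def e3 : Fin 3 → ℝ := ![0, 0, 1]

/-- Conformal factor λ(x) = 2/(1+|x|²) of the stereographic parametrization. -/
def lam (x : ℝ × ℝ) : ℝ := 2 / (1 + x.1 ^ 2 + x.2 ^ 2)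

/-- Stereographic parametrization Φ : ℝ² → S² ⊂ ℝ³ (centered at the north pole):
Φ(x) = λ(x)(x₁, x₂, (1-|x|²)/2). -/
def Phi (x : ℝ × ℝ) : Fin 3 → ℝ :=
  fun i => lam x * ![x.1, x.2, (1 - (x.1 ^ 2 + x.2 ^ 2)) / 2] i

/-- First partial derivative ∂₁ of a vector field on ℝ². -/
def pd1 (u : ℝ × ℝ → Fin 3 → ℝ) (x : ℝ × ℝ) : Fin 3 → ℝ := fderiv ℝ u x (1, 0)

/-- Second partial derivative ∂₂ of a vector field on ℝ². -/
def pd2 (u : ℝ × ℝ → Fin 3 → ℝ) (x : ℝ × ℝ) : Fin 3 → ℝ := fderiv ℝ u x (0, 1)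

/-- Topological vorticity ω(u) = u · (∂₁u × ∂₂u). -/
def vort (u : ℝ × ℝ → Fin 3 → ℝ) (x : ℝ × ℝ) : ℝ :=
  dot3 (u x) (cross3 (pd1 u x) (pd2 u x))

/-- Topological charge Q(u) = (1/4π) ∫ ω(u). -/
def Qdeg (u : ℝ × ℝ → Fin 3 → ℝ) : ℝ := (1 / (4 * Real.pi)) * ∫ x : ℝ × ℝ, vort u x

/-- Spin angular momentum S(u) = ∫ λ(x)² u(x) dx. -/
def Sspin (u : ℝ × ℝ → Fin 3 → ℝ) : Fin 3 → ℝ := ∫ x : ℝ × ℝ, lam x ^ 2 • u x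

/-- Orbital angular momentum L(u) = ∫ Φ(x) ω(u)(x) dx. -/
def Lorb (u : ℝ × ℝ → Fin 3 → ℝ) : Fin 3 → ℝ := ∫ x : ℝ × ℝ, vort u x • Phi x

/-- Total angular momentum J(u) = S(u) + L(u). -/
def Jmom (u : ℝ × ℝ → Fin 3 → ℝ) : Fin 3 → ℝ := Sspin u + Lorb u

/-- The micromagnetic energy in stereographic coordinates:
E(u) = (1/2) ∫ [|∇u|² + κ(1-(u·Φ)²)λ(x)²] dx. -/
def energy (κ : ℝ) (u : ℝ × ℝ → Fin 3 → ℝ) : ℝ :=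
  (1 / 2) * ∫ x : ℝ × ℝ,
    (dot3 (pd1 u x) (pd1 u x) + dot3 (pd2 u x) (pd2 u x)
      + κ * (1 - dot3 (u x) (Phi x) ^ 2) * lam x ^ 2)

/-- `u` takes values in the unit sphere S². -/
def SphereValued (u : ℝ × ℝ → Fin 3 → ℝ) : Prop := ∀ x, dot3 (u x) (u x) = 1

/-- Planar rotation ρ_θ of ℝ² by angle θ. -/
def rotPlane (θ : ℝ) (x : ℝ × ℝ) : ℝ × ℝ :=
  (Real.cos θ * x.1 - Real.sin θ * x.2, Real.sin θ * x.1 + Real.cos θ * x.2)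

/-- Rotation R_θ of ℝ³ by angle θ about the e₃-axis. -/
def rot3 (θ : ℝ) (v : Fin 3 → ℝ) : Fin 3 → ℝ :=
  ![Real.cos θ * v 0 - Real.sin θ * v 1, Real.sin θ * v 0 + Real.cos θ * v 1, v 2]

/-- k-equivariance: u(ρ_θ x) = R_{kθ} u(x) for all θ, x. -/
def IsEquivariant (k : ℤ) (u : ℝ × ℝ → Fin 3 → ℝ) : Prop :=
  ∀ (θ : ℝ) (x : ℝ × ℝ), u (rotPlane θ x) = rot3 ((k : ℝ) * θ) (u x)

/-- Planar Laplacian Δw = ∂₁₁w + ∂₂₂w of a vector field on ℝ². -/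
def lapP (w : ℝ × ℝ → Fin 3 → ℝ) (x : ℝ × ℝ) : Fin 3 → ℝ := pd1 (pd1 w) x + pd2 (pd2 w) x

/-- The Landau–Lifshitz equation in stereographic coordinates:
∂ₜu = u × (λ(x)⁻² Δu + κ (u·Φ) Φ). -/
def IsLLSolution (κ : ℝ) (u : ℝ → ℝ × ℝ → Fin 3 → ℝ) : Prop :=
  ∀ (t : ℝ) (x : ℝ × ℝ), deriv (fun s => u s x) t =
    cross3 (u t x) ((lam x ^ 2)⁻¹ • lapP (u t) x + (κ * dot3 (u t x) (Phi x)) • Phi x)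

lemma key_algebra (p f b c q1 q2 m : Fin 3 → ℝ) (hb : dot3 p b = 0) (hc : dot3 p c = 0) :
    dot3 (cross3 p f) (cross3 b c) + dot3 p (cross3 q1 c) + dot3 p (cross3 b q2)
      = (dot3 b (cross3 (cross3 p f) c) + dot3 p (cross3 q1 c) + dot3 p (cross3 (cross3 p f) m))
        + (dot3 c (cross3 b (cross3 p f)) + dot3 p (cross3 m (cross3 p f)) + dot3 p (cross3 b q2)) := by
  simp only [dot3, cross3, Matrix.cons_val_zero, Matrix.cons_val_one, Matrix.head_cons,
    Matrix.cons_val_two, Matrix.tail_cons] at *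
  linear_combination (3*(f 0 * c 0 + f 1 * c 1 + f 2 * c 2)) * hb
    - (3*(f 0 * b 0 + f 1 * b 1 + f 2 * b 2)) * hc

lemma cross3_zero_left (a : Fin 3 → ℝ) : cross3 0 a = 0 := by
  funext i; fin_cases i <;> simp [cross3]

lemma cross3_zero_right (a : Fin 3 → ℝ) : cross3 a 0 = 0 := by
  funext i; fin_cases i <;> simp [cross3]

lemma dot3_zero_right (a : Fin 3 → ℝ) : dot3 a 0 = 0 := by simp [dot3]

lemma dot3_zero_left (a : Fin 3 → ℝ) : dot3 0 a = 0 := by simp [dot3]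

lemma hasDerivAt_dot3 {A B : ℝ → Fin 3 → ℝ} {A' B' : Fin 3 → ℝ} {t : ℝ}
    (hA : HasDerivAt A A' t) (hB : HasDerivAt B B' t) :
    HasDerivAt (fun s => dot3 (A s) (B s)) (dot3 A' (B t) + dot3 (A t) B') t := by
  have a : ∀ i, HasDerivAt (fun s => A s i) (A' i) t := hasDerivAt_pi.1 hA
  have b : ∀ i, HasDerivAt (fun s => B s i) (B' i) t := hasDerivAt_pi.1 hB
  have h := (((a 0).mul (b 0)).add ((a 1).mul (b 1))).add ((a 2).mul (b 2))
  convert h using 1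
  · rfl
  · rfl
  · funext s; simp only [dot3]; rfl
  simp only [dot3]; ring

lemma hasDerivAt_triple {A B C : ℝ → Fin 3 → ℝ} {A' B' C' : Fin 3 → ℝ} {t : ℝ}
    (hA : HasDerivAt A A' t) (hB : HasDerivAt B B' t) (hC : HasDerivAt C C' t) :
    HasDerivAt (fun s => dot3 (A s) (cross3 (B s) (C s)))
      (dot3 A' (cross3 (B t) (C t)) + dot3 (A t) (cross3 B' (C t))
        + dot3 (A t) (cross3 (B t) C')) t := by
  have a : ∀ i, HasDerivAt (fun s => A s i) (A' i) t := hasDerivAt_pi.1 hA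
  have b : ∀ i, HasDerivAt (fun s => B s i) (B' i) t := hasDerivAt_pi.1 hB
  have c : ∀ i, HasDerivAt (fun s => C s i) (C' i) t := hasDerivAt_pi.1 hC
  have h := (((a 0).mul (((b 1).mul (c 2)).sub ((b 2).mul (c 1)))).add
      ((a 1).mul (((b 2).mul (c 0)).sub ((b 0).mul (c 2))))).add
      ((a 2).mul (((b 0).mul (c 1)).sub ((b 1).mul (c 0))))
  convert h using 1
  · rfl
  · rfl
  · funext s; simp only [dot3, cross3, Matrix.cons_val_zero, Matrix.cons_val_one, Matrix.head_cons,
      Matrix.cons_val_two, Matrix.tail_cons]; rfl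
  simp only [dot3, cross3, Matrix.cons_val_zero, Matrix.cons_val_one, Matrix.head_cons,
    Matrix.cons_val_two, Matrix.tail_cons, Pi.mul_apply, Pi.sub_apply]; ring

lemma den_pos (x : ℝ × ℝ) : (0:ℝ) < 1 + x.1 ^ 2 + x.2 ^ 2 := by positivity

lemma den_ne (x : ℝ × ℝ) : (1 + x.1 ^ 2 + x.2 ^ 2) ≠ 0 := (den_pos x).ne'

lemma contDiff_den : ContDiff ℝ (⊤ : ℕ∞) (fun x : ℝ × ℝ => 1 + x.1 ^ 2 + x.2 ^ 2) := by
  fun_prop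

lemma contDiff_lam : ContDiff ℝ (⊤ : ℕ∞) lam :=
  contDiff_const.div contDiff_den den_ne

lemma contDiff_Phi : ContDiff ℝ (⊤ : ℕ∞) Phi := by
  rw [contDiff_pi]
  intro i
  fin_cases i
  · simpa [Phi] using contDiff_lam.mul contDiff_fst
  · simpa [Phi] using contDiff_lam.mul contDiff_snd
  · have : ContDiff ℝ (⊤ : ℕ∞) (fun x : ℝ × ℝ => lam x * ((1 - (x.1 ^ 2 + x.2 ^ 2)) / 2)) :=
      contDiff_lam.mul ((by fun_prop : ContDiff ℝ (⊤ : ℕ∞) (fun x : ℝ × ℝ => 1 - (x.1 ^ 2 + x.2 ^ 2))).div_const 2)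
    simpa [Phi] using this

lemma hasDerivAt_slice1_Phi (x : ℝ × ℝ) :
    HasDerivAt (fun y => Phi (y, x.2)) (pd1 Phi x) x.1 := by
  have hd : HasFDerivAt Phi (fderiv ℝ Phi x) x :=
    ((contDiff_Phi.differentiable (by simp)) x).hasFDerivAt
  have hc : HasDerivAt (fun y : ℝ => (y, x.2)) (1, 0) x.1 :=
    (hasDerivAt_id _).prodMk (hasDerivAt_const _ _)
  simpa [pd1, Function.comp_def] using hd.comp_hasDerivAt x.1 hc

lemma hasDerivAt_slice2_Phi (x : ℝ × ℝ) :
    HasDerivAt (fun y => Phi (x.1, y)) (pd2 Phi x) x.2 := by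
  have hd : HasFDerivAt Phi (fderiv ℝ Phi x) x :=
    ((contDiff_Phi.differentiable (by simp)) x).hasFDerivAt
  have hc : HasDerivAt (fun y : ℝ => (x.1, y)) (0, 1) x.2 :=
    (hasDerivAt_const _ _).prodMk (hasDerivAt_id _)
  simpa [pd2, Function.comp_def] using hd.comp_hasDerivAt x.2 hc

lemma pd1_Phi (x : ℝ × ℝ) :
    pd1 Phi x = ![lam x - x.1^2 * lam x^2, -(x.1*x.2) * lam x^2, -x.1 * lam x^2] := by
  have hs := hasDerivAt_slice1_Phi x
  have hden : HasDerivAt (fun y : ℝ => 1 + y^2 + x.2^2) (2*x.1) x.1 := by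
    simpa using ((hasDerivAt_pow 2 x.1).const_add 1).add_const (x.2^2)
  funext i
  fin_cases i
  · have hi := hasDerivAt_pi.1 hs (0 : Fin 3)
    have e : (fun y => Phi (y, x.2) 0) = fun y => 2*y / (1 + y^2 + x.2^2) := by
      funext y; simp [Phi, lam]; ring
    have hn : HasDerivAt (fun y : ℝ => 2*y) 2 x.1 := by
      simpa using (hasDerivAt_id x.1).const_mul 2
    have hex := hn.div hden (den_ne x)
    rw [e] at hi
    have h2 := hi.unique hex
    show _ = _
    rw [show ((⟨0, by norm_num⟩ : Fin 3)) = (0 : Fin 3) from rfl]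
    rw [h2]
    simp only [Matrix.cons_val_zero, lam]
    field_simp
  · have hi := hasDerivAt_pi.1 hs (1 : Fin 3)
    have e : (fun y => Phi (y, x.2) 1) = fun y => 2*x.2 / (1 + y^2 + x.2^2) := by
      funext y; simp [Phi, lam]; ring
    have hn : HasDerivAt (fun _ : ℝ => 2*x.2) 0 x.1 := hasDerivAt_const _ _
    have hex := hn.div hden (den_ne x)
    rw [e] at hi
    have h2 := hi.unique hex
    show _ = _
    rw [show ((⟨1, by norm_num⟩ : Fin 3)) = (1 : Fin 3) from rfl]
    rw [h2]
    simp only [Matrix.cons_val_one, Matrix.head_cons, Matrix.cons_val_zero, lam]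
    field_simp
    ring
  · have hi := hasDerivAt_pi.1 hs (2 : Fin 3)
    have e : (fun y => Phi (y, x.2) 2) = fun y => (1 - (y^2 + x.2^2)) / (1 + y^2 + x.2^2) := by
      funext y; simp [Phi, lam]
    have hn : HasDerivAt (fun y : ℝ => 1 - (y^2 + x.2^2)) (-(2*x.1)) x.1 := by
      simpa using ((hasDerivAt_pow 2 x.1).add_const (x.2^2)).const_sub 1
    have hex := hn.div hden (den_ne x)
    rw [e] at hi
    have h2 := hi.unique hex
    show _ = _
    rw [show ((⟨2, by norm_num⟩ : Fin 3)) = (2 : Fin 3) from rfl]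
    rw [h2]
    simp only [Matrix.cons_val_two, Matrix.tail_cons, Matrix.head_cons, lam]
    field_simp
    ring

lemma pd2_Phi (x : ℝ × ℝ) :
    pd2 Phi x = ![-(x.1*x.2) * lam x^2, lam x - x.2^2 * lam x^2, -x.2 * lam x^2] := by
  have hs := hasDerivAt_slice2_Phi x
  have hden : HasDerivAt (fun y : ℝ => 1 + x.1^2 + y^2) (2*x.2) x.2 := by
    simpa using (hasDerivAt_pow 2 x.2).const_add (1 + x.1^2)
  funext i
  fin_cases i
  · have hi := hasDerivAt_pi.1 hs (0 : Fin 3)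
    have e : (fun y => Phi (x.1, y) 0) = fun y => 2*x.1 / (1 + x.1^2 + y^2) := by
      funext y; simp [Phi, lam]; ring
    have hn : HasDerivAt (fun _ : ℝ => 2*x.1) 0 x.2 := hasDerivAt_const _ _
    have hex := hn.div hden (den_ne x)
    rw [e] at hi
    have h2 := hi.unique hex
    show _ = _
    rw [show ((⟨0, by norm_num⟩ : Fin 3)) = (0 : Fin 3) from rfl]
    rw [h2]
    simp only [Matrix.cons_val_zero, lam]
    field_simp
    ring
  · have hi := hasDerivAt_pi.1 hs (1 : Fin 3)
    have e : (fun y => Phi (x.1, y) 1) = fun y => 2*y / (1 + x.1^2 + y^2) := by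
      funext y; simp [Phi, lam]; ring
    have hn : HasDerivAt (fun y : ℝ => 2*y) 2 x.2 := by
      simpa using (hasDerivAt_id x.2).const_mul 2
    have hex := hn.div hden (den_ne x)
    rw [e] at hi
    have h2 := hi.unique hex
    show _ = _
    rw [show ((⟨1, by norm_num⟩ : Fin 3)) = (1 : Fin 3) from rfl]
    rw [h2]
    simp only [Matrix.cons_val_one, Matrix.head_cons, Matrix.cons_val_zero, lam]
    field_simp
  · have hi := hasDerivAt_pi.1 hs (2 : Fin 3)
    have e : (fun y => Phi (x.1, y) 2) = fun y => (1 - (x.1^2 + y^2)) / (1 + x.1^2 + y^2) := by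
      funext y; simp [Phi, lam]
    have hn : HasDerivAt (fun y : ℝ => 1 - (x.1^2 + y^2)) (-(2*x.2)) x.2 := by
      simpa using ((hasDerivAt_pow 2 x.2).const_add (x.1^2)).const_sub 1
    have hex := hn.div hden (den_ne x)
    rw [e] at hi
    have h2 := hi.unique hex
    show _ = _
    rw [show ((⟨2, by norm_num⟩ : Fin 3)) = (2 : Fin 3) from rfl]
    rw [h2]
    simp only [Matrix.cons_val_two, Matrix.tail_cons, Matrix.head_cons, lam]
    field_simp
    ring

lemma vort_Phi (x : ℝ × ℝ) : vort Phi x = lam x ^ 2 := by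
  rw [vort, pd1_Phi, pd2_Phi]
  simp only [dot3, cross3, Phi, lam, Matrix.cons_val_zero, Matrix.cons_val_one, Matrix.head_cons,
    Matrix.cons_val_two, Matrix.tail_cons]
  have h := den_ne x
  field_simp
  ring

lemma normsq_le_x (x : ℝ × ℝ) : ‖x‖ ^ 2 ≤ x.1 ^ 2 + x.2 ^ 2 := by
  rw [Prod.norm_def]
  rcases max_cases ‖x.1‖ ‖x.2‖ with ⟨h, _⟩ | ⟨h, _⟩ <;> rw [h] <;>
    simp only [Real.norm_eq_abs, sq_abs] <;> nlinarith [sq_nonneg x.1, sq_nonneg x.2]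

lemma integrable_lam_sq : Integrable (fun x : ℝ × ℝ => lam x ^ 2) := by
  have key : Integrable (fun x : ℝ × ℝ => ((1 : ℝ) + ‖x‖ ^ 2) ^ (-(4:ℝ) / 2)) :=
    integrable_rpow_neg_one_add_norm_sq (by simp; norm_num)
  refine (key.const_mul 4).mono' ((contDiff_lam.continuous.pow 2).aestronglyMeasurable) ?_
  refine Eventually.of_forall fun x => ?_
  have h1 : (0:ℝ) < 1 + ‖x‖ ^ 2 := by positivity
  have h2 : ((1 : ℝ) + ‖x‖ ^ 2) ^ (-(4:ℝ) / 2) = ((1 + ‖x‖ ^ 2) ^ 2)⁻¹ := by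
    rw [show (-(4:ℝ)/2) = -(2:ℕ) by norm_num, Real.rpow_neg h1.le, Real.rpow_natCast]
  rw [h2]
  have h3 : 1 + ‖x‖ ^ 2 ≤ 1 + x.1 ^ 2 + x.2 ^ 2 := by
    have := normsq_le_x x; linarith
  have h4 : (0:ℝ) < 1 + x.1 ^ 2 + x.2 ^ 2 := den_pos x
  have h5 : (1 + ‖x‖ ^ 2) ^ 2 ≤ (1 + x.1 ^ 2 + x.2 ^ 2) ^ 2 := by nlinarith
  have h6 : lam x ^ 2 = 4 / (1 + x.1 ^ 2 + x.2 ^ 2) ^ 2 := by rw [lam, div_pow]; norm_num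
  have h7 : ‖lam x ^ 2‖ = 4 / (1 + x.1 ^ 2 + x.2 ^ 2) ^ 2 := by
    rw [Real.norm_eq_abs, abs_of_nonneg (by rw [h6]; positivity), h6]
  have h8 : (4:ℝ) * ((1 + ‖x‖ ^ 2) ^ 2)⁻¹ = 4 / ((1 + ‖x‖ ^ 2) ^ 2) := by ring
  rw [h7, h8]
  gcongr

abbrev vt : ℝ × (ℝ × ℝ) := (1, (0, 0))
abbrev v1 : ℝ × (ℝ × ℝ) := (0, (1, 0))
abbrev v2 : ℝ × (ℝ × ℝ) := (0, (0, 1))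

def DV (U : ℝ × (ℝ × ℝ) → Fin 3 → ℝ) (v p : ℝ × (ℝ × ℝ)) : Fin 3 → ℝ := fderiv ℝ U p v

def DVV (U : ℝ × (ℝ × ℝ) → Fin 3 → ℝ) (v w p : ℝ × (ℝ × ℝ)) : Fin 3 → ℝ :=
  fderiv ℝ (DV U v) p w

section U

variable {U : ℝ × (ℝ × ℝ) → Fin 3 → ℝ}

lemma contDiff_DV (hU : ContDiff ℝ (⊤ : ℕ∞) U) (v : ℝ × (ℝ × ℝ)) : ContDiff ℝ (⊤ : ℕ∞) (DV U v) :=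
  (hU.fderiv_right (by simp)).clm_apply contDiff_const

lemma contDiff_DVV (hU : ContDiff ℝ (⊤ : ℕ∞) U) (v w : ℝ × (ℝ × ℝ)) : ContDiff ℝ (⊤ : ℕ∞) (DVV U v w) :=
  ((contDiff_DV hU v).fderiv_right (by simp)).clm_apply contDiff_const

lemma hasDerivAt_Ut {f : ℝ × (ℝ × ℝ) → Fin 3 → ℝ} (hf : Differentiable ℝ f) (t : ℝ)
    (x : ℝ × ℝ) : HasDerivAt (fun s => f (s, x)) (DV f vt (t, x)) t := by
  have hc : HasDerivAt (fun s : ℝ => (s, x)) ((1 : ℝ), (0 : ℝ × ℝ)) t :=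
    (hasDerivAt_id _).prodMk (hasDerivAt_const _ _)
  simpa [Function.comp_def, DV, vt, Prod.mk_zero_zero] using ((hf (t, x)).hasFDerivAt).comp_hasDerivAt t hc

lemma hasDerivAt_U1 {f : ℝ × (ℝ × ℝ) → Fin 3 → ℝ} (hf : Differentiable ℝ f) (t : ℝ)
    (x : ℝ × ℝ) : HasDerivAt (fun y => f (t, (y, x.2))) (DV f v1 (t, x)) x.1 := by
  have hc : HasDerivAt (fun y : ℝ => (t, (y, x.2))) ((0 : ℝ), ((1 : ℝ), (0 : ℝ))) x.1 :=
    (hasDerivAt_const _ _).prodMk ((hasDerivAt_id _).prodMk (hasDerivAt_const _ _))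
  simpa [Function.comp_def, DV] using ((hf (t, x)).hasFDerivAt).comp_hasDerivAt x.1 hc

lemma hasDerivAt_U2 {f : ℝ × (ℝ × ℝ) → Fin 3 → ℝ} (hf : Differentiable ℝ f) (t : ℝ)
    (x : ℝ × ℝ) : HasDerivAt (fun y => f (t, (x.1, y))) (DV f v2 (t, x)) x.2 := by
  have hc : HasDerivAt (fun y : ℝ => (t, (x.1, y))) ((0 : ℝ), ((0 : ℝ), (1 : ℝ))) x.2 :=
    (hasDerivAt_const _ _).prodMk ((hasDerivAt_const _ _).prodMk (hasDerivAt_id _))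
  simpa [Function.comp_def, DV] using ((hf (t, x)).hasFDerivAt).comp_hasDerivAt x.2 hc

lemma pd1_slice {f : ℝ × (ℝ × ℝ) → Fin 3 → ℝ} (hf : Differentiable ℝ f) (t : ℝ) (x : ℝ × ℝ) :
    pd1 (fun y => f (t, y)) x = DV f v1 (t, x) := by
  have hmk : HasFDerivAt (fun y : ℝ × ℝ => (t, y))
      ((0 : (ℝ × ℝ) →L[ℝ] ℝ).prod (ContinuousLinearMap.id ℝ (ℝ × ℝ))) x :=
    (hasFDerivAt_const _ _).prodMk (hasFDerivAt_id _)
  have h2 : HasFDerivAt (fun y => f (t, y))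
      ((fderiv ℝ f (t, x)).comp ((0 : (ℝ × ℝ) →L[ℝ] ℝ).prod (ContinuousLinearMap.id ℝ (ℝ × ℝ)))) x :=
    (hf (t, x)).hasFDerivAt.comp x hmk
  rw [pd1, h2.fderiv]
  simp [DV]

lemma pd2_slice {f : ℝ × (ℝ × ℝ) → Fin 3 → ℝ} (hf : Differentiable ℝ f) (t : ℝ) (x : ℝ × ℝ) :
    pd2 (fun y => f (t, y)) x = DV f v2 (t, x) := by
  have hmk : HasFDerivAt (fun y : ℝ × ℝ => (t, y))
      ((0 : (ℝ × ℝ) →L[ℝ] ℝ).prod (ContinuousLinearMap.id ℝ (ℝ × ℝ))) x :=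
    (hasFDerivAt_const _ _).prodMk (hasFDerivAt_id _)
  have h2 : HasFDerivAt (fun y => f (t, y))
      ((fderiv ℝ f (t, x)).comp ((0 : (ℝ × ℝ) →L[ℝ] ℝ).prod (ContinuousLinearMap.id ℝ (ℝ × ℝ)))) x :=
    (hf (t, x)).hasFDerivAt.comp x hmk
  rw [pd2, h2.fderiv]
  simp [DV]

lemma DVV_symm (hU : ContDiff ℝ (⊤ : ℕ∞) U) (v w p : ℝ × (ℝ × ℝ)) : DVV U v w p = DVV U w v p := by
  have hdiff : ∀ q, HasFDerivAt U (fderiv ℝ U q) q := fun q =>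
    ((hU.differentiable (by simp)) q).hasFDerivAt
  have hf' : HasFDerivAt (fderiv ℝ U) (fderiv ℝ (fderiv ℝ U) p) p :=
    ((((hU.fderiv_right (m := (⊤ : ℕ∞)) (by simp)).differentiable (by simp))) p).hasFDerivAt
  have hsym := second_derivative_symmetric hdiff hf'
  have key : ∀ a b : ℝ × (ℝ × ℝ), DVV U a b p = fderiv ℝ (fderiv ℝ U) p b a := by
    intro a b
    have h1 : HasFDerivAt (DV U a)
        ((ContinuousLinearMap.apply ℝ (Fin 3 → ℝ) a).comp (fderiv ℝ (fderiv ℝ U) p)) p :=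
      ((ContinuousLinearMap.apply ℝ (Fin 3 → ℝ) a).hasFDerivAt).comp p hf'
    rw [DVV, h1.fderiv]
    simp
  rw [key v w, key w v, hsym w v]

end U

def Gp (U : ℝ × (ℝ × ℝ) → Fin 3 → ℝ) (p : ℝ × (ℝ × ℝ)) : ℝ :=
  dot3 (DV U vt p) (cross3 (DV U v1 p) (DV U v2 p))
    + dot3 (U p) (cross3 (DVV U v1 vt p) (DV U v2 p))
    + dot3 (U p) (cross3 (DV U v1 p) (DVV U v2 vt p))

def W1f (U : ℝ × (ℝ × ℝ) → Fin 3 → ℝ) (p : ℝ × (ℝ × ℝ)) : ℝ :=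
  dot3 (DV U v1 p) (cross3 (DV U vt p) (DV U v2 p))
    + dot3 (U p) (cross3 (DVV U vt v1 p) (DV U v2 p))
    + dot3 (U p) (cross3 (DV U vt p) (DVV U v2 v1 p))

def W2f (U : ℝ × (ℝ × ℝ) → Fin 3 → ℝ) (p : ℝ × (ℝ × ℝ)) : ℝ :=
  dot3 (DV U v2 p) (cross3 (DV U v1 p) (DV U vt p))
    + dot3 (U p) (cross3 (DVV U v1 v2 p) (DV U vt p))
    + dot3 (U p) (cross3 (DV U v1 p) (DVV U vt v2 p))

def V1f (U : ℝ × (ℝ × ℝ) → Fin 3 → ℝ) (p : ℝ × (ℝ × ℝ)) : ℝ :=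
  dot3 (U p) (cross3 (DV U vt p) (DV U v2 p))

def V2f (U : ℝ × (ℝ × ℝ) → Fin 3 → ℝ) (p : ℝ × (ℝ × ℝ)) : ℝ :=
  dot3 (U p) (cross3 (DV U v1 p) (DV U vt p))

lemma continuous_tprod {α : Type*} [TopologicalSpace α] {A B C : α → Fin 3 → ℝ}
    (hA : Continuous A) (hB : Continuous B) (hC : Continuous C) :
    Continuous (fun p => dot3 (A p) (cross3 (B p) (C p))) := by
  have a : ∀ i, Continuous fun p => A p i := fun i => (continuous_apply i).comp hA
  have b : ∀ i, Continuous fun p => B p i := fun i => (continuous_apply i).comp hB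
  have c : ∀ i, Continuous fun p => C p i := fun i => (continuous_apply i).comp hC
  have h := (((a 0).mul (((b 1).mul (c 2)).sub ((b 2).mul (c 1)))).add
      ((a 1).mul (((b 2).mul (c 0)).sub ((b 0).mul (c 2))))).add
      ((a 2).mul (((b 0).mul (c 1)).sub ((b 1).mul (c 0))))
  convert h using 2
  simp [dot3, cross3]

section U2

variable {U : ℝ × (ℝ × ℝ) → Fin 3 → ℝ}

lemma continuous_Gp (hU : ContDiff ℝ (⊤ : ℕ∞) U) : Continuous (Gp U) := by
  unfold Gp
  exact ((continuous_tprod ((contDiff_DV hU vt).continuous) ((contDiff_DV hU v1).continuous)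
      ((contDiff_DV hU v2).continuous)).add
    (continuous_tprod hU.continuous ((contDiff_DVV hU v1 vt).continuous)
      ((contDiff_DV hU v2).continuous))).add
    (continuous_tprod hU.continuous ((contDiff_DV hU v1).continuous)
      ((contDiff_DVV hU v2 vt).continuous))

lemma continuous_W1f (hU : ContDiff ℝ (⊤ : ℕ∞) U) : Continuous (W1f U) := by
  unfold W1f
  refine Continuous.add (Continuous.add ?_ ?_) ?_
  · exact continuous_tprod ((contDiff_DV hU v1).continuous) ((contDiff_DV hU vt).continuous)
      ((contDiff_DV hU v2).continuous)
  · exact continuous_tprod hU.continuous ((contDiff_DVV hU vt v1).continuous)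
      ((contDiff_DV hU v2).continuous)
  · exact continuous_tprod hU.continuous ((contDiff_DV hU vt).continuous)
      ((contDiff_DVV hU v2 v1).continuous)

lemma continuous_W2f (hU : ContDiff ℝ (⊤ : ℕ∞) U) : Continuous (W2f U) := by
  unfold W2f
  refine Continuous.add (Continuous.add ?_ ?_) ?_
  · exact continuous_tprod ((contDiff_DV hU v2).continuous) ((contDiff_DV hU v1).continuous)
      ((contDiff_DV hU vt).continuous)
  · exact continuous_tprod hU.continuous ((contDiff_DVV hU v1 v2).continuous)
      ((contDiff_DV hU vt).continuous)
  · exact continuous_tprod hU.continuous ((contDiff_DV hU v1).continuous)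
      ((contDiff_DVV hU vt v2).continuous)

lemma hasDerivAt_vort_t (hU : ContDiff ℝ (⊤ : ℕ∞) U) (t : ℝ) (x : ℝ × ℝ) :
    HasDerivAt (fun s => vort (fun y => U (s, y)) x) (Gp U (t, x)) t := by
  have hdiff := hU.differentiable (by simp)
  have e : (fun s => vort (fun y => U (s, y)) x)
      = fun s => dot3 (U (s, x)) (cross3 (DV U v1 (s, x)) (DV U v2 (s, x))) := by
    funext s
    rw [vort, pd1_slice hdiff, pd2_slice hdiff]
  rw [e]
  have hA := hasDerivAt_Ut hdiff t x
  have hB := hasDerivAt_Ut ((contDiff_DV hU v1).differentiable (by simp)) t x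
  have hC := hasDerivAt_Ut ((contDiff_DV hU v2).differentiable (by simp)) t x
  exact hasDerivAt_triple hA hB hC

lemma hasDerivAt_V1_x1 (hU : ContDiff ℝ (⊤ : ℕ∞) U) (t : ℝ) (x : ℝ × ℝ) :
    HasDerivAt (fun y => V1f U (t, (y, x.2))) (W1f U (t, x)) x.1 := by
  have hdiff := hU.differentiable (by simp)
  have hA := hasDerivAt_U1 hdiff t x
  have hB := hasDerivAt_U1 ((contDiff_DV hU vt).differentiable (by simp)) t x
  have hC := hasDerivAt_U1 ((contDiff_DV hU v2).differentiable (by simp)) t x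
  exact hasDerivAt_triple hA hB hC

lemma hasDerivAt_V2_x2 (hU : ContDiff ℝ (⊤ : ℕ∞) U) (t : ℝ) (x : ℝ × ℝ) :
    HasDerivAt (fun y => V2f U (t, (x.1, y))) (W2f U (t, x)) x.2 := by
  have hdiff := hU.differentiable (by simp)
  have hA := hasDerivAt_U2 hdiff t x
  have hB := hasDerivAt_U2 ((contDiff_DV hU v1).differentiable (by simp)) t x
  have hC := hasDerivAt_U2 ((contDiff_DV hU vt).differentiable (by simp)) t x
  exact hasDerivAt_triple hA hB hC

lemma dot3_comm (a b : Fin 3 → ℝ) : dot3 a b = dot3 b a := by simp [dot3]; ring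

lemma dot_u_u1 (hU : ContDiff ℝ (⊤ : ℕ∞) U) (hsph : ∀ p, dot3 (U p) (U p) = 1) (t : ℝ) (x : ℝ × ℝ) :
    dot3 (U (t, x)) (DV U v1 (t, x)) = 0 := by
  have hA := hasDerivAt_U1 (hU.differentiable (by simp)) t x
  have h := hasDerivAt_dot3 hA hA
  have hconst : HasDerivAt (fun y : ℝ => dot3 (U (t, (y, x.2))) (U (t, (y, x.2)))) 0 x.1 := by
    have e : (fun y : ℝ => dot3 (U (t, (y, x.2))) (U (t, (y, x.2)))) = fun _ => 1 :=
      funext fun y => hsph _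
    rw [e]; exact hasDerivAt_const _ _
  have h2 := h.unique hconst
  rw [dot3_comm (DV U v1 (t,x))] at h2
  linarith [h2]

lemma dot_u_u2 (hU : ContDiff ℝ (⊤ : ℕ∞) U) (hsph : ∀ p, dot3 (U p) (U p) = 1) (t : ℝ) (x : ℝ × ℝ) :
    dot3 (U (t, x)) (DV U v2 (t, x)) = 0 := by
  have hA := hasDerivAt_U2 (hU.differentiable (by simp)) t x
  have h := hasDerivAt_dot3 hA hA
  have hconst : HasDerivAt (fun y : ℝ => dot3 (U (t, (x.1, y))) (U (t, (x.1, y)))) 0 x.2 := by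
    have e : (fun y : ℝ => dot3 (U (t, (x.1, y))) (U (t, (x.1, y)))) = fun _ => 1 :=
      funext fun y => hsph _
    rw [e]; exact hasDerivAt_const _ _
  have h2 := h.unique hconst
  rw [dot3_comm (DV U v2 (t,x))] at h2
  linarith [h2]

lemma Gp_eq (hU : ContDiff ℝ (⊤ : ℕ∞) U) (hsph : ∀ p, dot3 (U p) (U p) = 1) (t : ℝ) (x : ℝ × ℝ)
    (F : Fin 3 → ℝ) (hut : DV U vt (t, x) = cross3 (U (t, x)) F) :
    Gp U (t, x) = W1f U (t, x) + W2f U (t, x) := by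
  have hb := dot_u_u1 hU hsph t x
  have hc := dot_u_u2 hU hsph t x
  rw [Gp, W1f, W2f, hut, DVV_symm hU v1 vt, DVV_symm hU v2 vt, DVV_symm hU v2 v1]
  exact key_algebra _ F _ _ _ _ _ hb hc

end U2


/-- **Conservation of the topological charge.**
If `u` is a smooth solution of the Landau–Lifshitz equation in stereographic
coordinates which agrees with `Φ` outside a ball, then `t ↦ Q(u(t,·))` is constant. -/
theorem topological_charge_conserved
    (κ R : ℝ) (hκ : 0 < κ) (hR : 0 < R)
    (u : ℝ → ℝ × ℝ → Fin 3 → ℝ)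
    (hsm : ContDiff ℝ (⊤ : ℕ∞) (fun p : ℝ × (ℝ × ℝ) => u p.1 p.2))
    (hsph : ∀ t, SphereValued (u t))
    (hLL : IsLLSolution κ u)
    (hloc : ∀ (t : ℝ) (x : ℝ × ℝ), R ^ 2 ≤ x.1 ^ 2 + x.2 ^ 2 → u t x = Phi x) :
    ∀ t t' : ℝ, Qdeg (u t) = Qdeg (u t') := by
  have hU : ContDiff ℝ (⊤ : ℕ∞) (fun p : ℝ × (ℝ × ℝ) => u p.1 p.2) := hsm
  set J : ℝ × (ℝ × ℝ) → Fin 3 → ℝ := fun p => u p.1 p.2 with hJdef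
  have hdiffJ : Differentiable ℝ J := hU.differentiable (by simp)
  have hsphJ : ∀ p : ℝ × (ℝ × ℝ), dot3 (J p) (J p) = 1 := fun p => hsph p.1 p.2
  -- outside region
  set O : Set (ℝ × ℝ) := {x | R ^ 2 < x.1 ^ 2 + x.2 ^ 2} with hOdef
  have hO_open : IsOpen O := by
    have : Continuous fun x : ℝ × ℝ => x.1 ^ 2 + x.2 ^ 2 := by fun_prop
    exact isOpen_lt continuous_const this
  have hnorm_mem_O : ∀ x : ℝ × ℝ, R < ‖x‖ → x ∈ O := by
    intro x hx
    have h1 : R ^ 2 < ‖x‖ ^ 2 := by nlinarith [hR]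
    have h2 := normsq_le_x x
    exact lt_of_lt_of_le h1 h2
  have hut0 : ∀ (s : ℝ) (x : ℝ × ℝ), R ^ 2 ≤ x.1 ^ 2 + x.2 ^ 2 → DV J vt (s, x) = 0 := by
    intro s x hx
    have h1 : HasDerivAt (fun r => J (r, x)) (DV J vt (s, x)) s := hasDerivAt_Ut hdiffJ s x
    have h2 : (fun r : ℝ => J (r, x)) = fun _ => Phi x := funext fun r => hloc r x hx
    have h3 : HasDerivAt (fun r : ℝ => J (r, x)) 0 s := by
      rw [h2]; exact hasDerivAt_const _ _
    exact h1.unique h3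
  have hDVVt0 : ∀ (w : ℝ × (ℝ × ℝ)) (s : ℝ) (x : ℝ × ℝ), x ∈ O → DVV J vt w (s, x) = 0 := by
    intro w s x hx
    have hopen : IsOpen ((Set.univ : Set ℝ) ×ˢ O) := isOpen_univ.prod hO_open
    have hev : DV J vt =ᶠ[nhds (s, x)] fun _ => 0 := by
      filter_upwards [hopen.mem_nhds ⟨trivial, hx⟩] with q hq
      exact hut0 q.1 q.2 (le_of_lt hq.2)
    rw [DVV, hev.fderiv_eq]
    simp
  have hW1_0 : ∀ (s : ℝ) (x : ℝ × ℝ), x ∈ O → W1f J (s, x) = 0 := by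
    intro s x hx
    rw [W1f, hut0 s x (le_of_lt hx), hDVVt0 v1 s x hx]
    simp [cross3_zero_left, cross3_zero_right, dot3_zero_right]
  have hW2_0 : ∀ (s : ℝ) (x : ℝ × ℝ), x ∈ O → W2f J (s, x) = 0 := by
    intro s x hx
    rw [W2f, hut0 s x (le_of_lt hx), hDVVt0 v2 s x hx]
    simp [cross3_zero_left, cross3_zero_right, dot3_zero_right]
  have hGp_0 : ∀ (s : ℝ) (x : ℝ × ℝ), x ∈ O → Gp J (s, x) = 0 := by
    intro s x hx
    rw [Gp, DVV_symm hU v1 vt, DVV_symm hU v2 vt, hut0 s x (le_of_lt hx),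
      hDVVt0 v1 s x hx, hDVVt0 v2 s x hx]
    simp [cross3_zero_left, cross3_zero_right, dot3_zero_right, dot3_zero_left]
  -- continuity of vort slices
  have hvort_cont : ∀ s : ℝ, Continuous (vort (u s)) := by
    intro s
    have e : vort (u s) = fun x => dot3 (J (s, x)) (cross3 (DV J v1 (s, x)) (DV J v2 (s, x))) := by
      funext x
      show vort (fun y => J (s, y)) x = _
      rw [vort, pd1_slice hdiffJ, pd2_slice hdiffJ]
    rw [e]
    have hmk : Continuous fun x : ℝ × ℝ => ((s, x) : ℝ × (ℝ × ℝ)) :=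
      continuous_const.prodMk continuous_id
    exact continuous_tprod (hU.continuous.comp hmk)
      (((contDiff_DV hU v1).continuous).comp hmk) (((contDiff_DV hU v2).continuous).comp hmk)
  have hvort_eq_Phi : ∀ (s : ℝ) (x : ℝ × ℝ), x ∈ O → vort (u s) x = vort Phi x := by
    intro s x hx
    have hev : u s =ᶠ[nhds x] Phi := by
      filter_upwards [hO_open.mem_nhds hx] with y hy
      exact hloc s y (le_of_lt hy)
    rw [vort, vort, pd1, pd1, pd2, pd2, hev.fderiv_eq, hloc s x (le_of_lt hx)]
  -- integrability
  have hInt : ∀ s : ℝ, Integrable (vort (u s)) := by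
    intro s
    have hdecomp : vort (u s) = fun x => lam x ^ 2 + (vort (u s) x - lam x ^ 2) := by
      funext x; ring
    rw [hdecomp]
    refine integrable_lam_sq.add ?_
    refine Continuous.integrable_of_hasCompactSupport
      ((hvort_cont s).sub (contDiff_lam.continuous.pow 2)) ?_
    refine HasCompactSupport.intro (isCompact_closedBall (0 : ℝ × ℝ) R) ?_
    intro x hx
    have hxO : x ∈ O := by
      apply hnorm_mem_O
      simpa [Metric.mem_closedBall, dist_zero_right, not_le] using hx
    rw [hvort_eq_Phi s x hxO, vort_Phi]
    ring
  -- endpoint vanishing for FTC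
  have hV1zero : ∀ (s : ℝ) (x : ℝ × ℝ), R ^ 2 ≤ x.1 ^ 2 + x.2 ^ 2 → V1f J (s, x) = 0 := by
    intro s x hx
    rw [V1f, hut0 s x hx]
    simp [cross3_zero_left, dot3_zero_right]
  have hV2zero : ∀ (s : ℝ) (x : ℝ × ℝ), R ^ 2 ≤ x.1 ^ 2 + x.2 ^ 2 → V2f J (s, x) = 0 := by
    intro s x hx
    rw [V2f, hut0 s x hx]
    simp [cross3_zero_right, dot3_zero_right]
  -- inner integrals vanish
  have hep1 : ∀ z : ℝ, R ^ 2 ≤ (R + 1) ^ 2 + z ^ 2 := fun z => by nlinarith [sq_nonneg z]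
  have hep2 : ∀ z : ℝ, R ^ 2 ≤ (-(R + 1)) ^ 2 + z ^ 2 := fun z => by nlinarith [sq_nonneg z]
  have hep3 : ∀ z : ℝ, R ^ 2 ≤ z ^ 2 + (R + 1) ^ 2 := fun z => by nlinarith [sq_nonneg z]
  have hep4 : ∀ z : ℝ, R ^ 2 ≤ z ^ 2 + (-(R + 1)) ^ 2 := fun z => by nlinarith [sq_nonneg z]
  have hinner1 : ∀ (s : ℝ) (y : ℝ), (∫ x₁ : ℝ, W1f J (s, (x₁, y))) = 0 := by
    intro s y
    have hsupp : ∀ x₁ : ℝ, x₁ ∉ Set.Ioc (-(R + 1)) (R + 1) → W1f J (s, (x₁, y)) = 0 := by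
      intro x₁ hx₁
      apply hW1_0
      show R ^ 2 < x₁ ^ 2 + y ^ 2
      rw [Set.mem_Ioc, not_and_or] at hx₁
      rcases hx₁ with h | h
      · push_neg at h; nlinarith [sq_nonneg y]
      · push_neg at h; nlinarith [sq_nonneg y]
    rw [← MeasureTheory.setIntegral_eq_integral_of_forall_compl_eq_zero hsupp,
      ← intervalIntegral.integral_of_le (by linarith : -(R + 1) ≤ R + 1)]
    have hderiv : ∀ x₁ ∈ Set.uIcc (-(R + 1)) (R + 1),
        HasDerivAt (fun z => V1f J (s, (z, y))) (W1f J (s, (x₁, y))) x₁ :=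
      fun x₁ _ => hasDerivAt_V1_x1 hU s (x₁, y)
    have hcont : Continuous fun x₁ : ℝ => W1f J (s, (x₁, y)) :=
      (continuous_W1f hU).comp
        (continuous_const.prodMk (continuous_id.prodMk continuous_const))
    rw [intervalIntegral.integral_eq_sub_of_hasDerivAt hderiv
      (hcont.intervalIntegrable _ _)]
    rw [hV1zero s ((R+1), y) (hep1 y), hV1zero s (-(R+1), y) (hep2 y)]
    ring
  have hinner2 : ∀ (s : ℝ) (x₁ : ℝ), (∫ y : ℝ, W2f J (s, (x₁, y))) = 0 := by
    intro s x₁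
    have hsupp : ∀ y : ℝ, y ∉ Set.Ioc (-(R + 1)) (R + 1) → W2f J (s, (x₁, y)) = 0 := by
      intro y hy
      apply hW2_0
      show R ^ 2 < x₁ ^ 2 + y ^ 2
      rw [Set.mem_Ioc, not_and_or] at hy
      rcases hy with h | h
      · push_neg at h; nlinarith [sq_nonneg x₁]
      · push_neg at h; nlinarith [sq_nonneg x₁]
    rw [← MeasureTheory.setIntegral_eq_integral_of_forall_compl_eq_zero hsupp,
      ← intervalIntegral.integral_of_le (by linarith : -(R + 1) ≤ R + 1)]
    have hderiv : ∀ y ∈ Set.uIcc (-(R + 1)) (R + 1),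
        HasDerivAt (fun z => V2f J (s, (x₁, z))) (W2f J (s, (x₁, y))) y :=
      fun y _ => hasDerivAt_V2_x2 hU s (x₁, y)
    have hcont : Continuous fun y : ℝ => W2f J (s, (x₁, y)) :=
      (continuous_W2f hU).comp
        (continuous_const.prodMk (continuous_const.prodMk continuous_id))
    rw [intervalIntegral.integral_eq_sub_of_hasDerivAt hderiv
      (hcont.intervalIntegrable _ _)]
    rw [hV2zero s (x₁, (R+1)) (hep3 x₁), hV2zero s (x₁, -(R+1)) (hep4 x₁)]
    ring
  -- integrability of W's
  have hsuppW : ∀ (f : ℝ × (ℝ × ℝ) → ℝ), (∀ s x, x ∈ O → f (s, x) = 0) → ∀ s : ℝ,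
      HasCompactSupport fun x : ℝ × ℝ => f (s, x) := by
    intro f hf s
    refine HasCompactSupport.intro (isCompact_closedBall (0 : ℝ × ℝ) R) ?_
    intro x hx
    refine hf s x (hnorm_mem_O x ?_)
    simpa [Metric.mem_closedBall, dist_zero_right, not_le] using hx
  have hIntW1 : ∀ s : ℝ, Integrable (fun x : ℝ × ℝ => W1f J (s, x)) := by
    intro s
    exact Continuous.integrable_of_hasCompactSupport
      ((continuous_W1f hU).comp (continuous_const.prodMk continuous_id))
      (hsuppW (W1f J) hW1_0 s)
  have hIntW2 : ∀ s : ℝ, Integrable (fun x : ℝ × ℝ => W2f J (s, x)) := by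
    intro s
    exact Continuous.integrable_of_hasCompactSupport
      ((continuous_W2f hU).comp (continuous_const.prodMk continuous_id))
      (hsuppW (W2f J) hW2_0 s)
  -- the LL structure: time derivative is a cross product with u
  have hutcross : ∀ (s : ℝ) (x : ℝ × ℝ), DV J vt (s, x) = cross3 (J (s, x))
      ((lam x ^ 2)⁻¹ • lapP (u s) x + (κ * dot3 (u s x) (Phi x)) • Phi x) := by
    intro s x
    have h1 := (hasDerivAt_Ut hdiffJ s x).deriv
    rw [← h1]
    exact hLL s x
  -- the integral of Gp vanishes
  have hGzero : ∀ s : ℝ, (∫ x : ℝ × ℝ, Gp J (s, x)) = 0 := by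
    intro s
    have hsum : (fun x : ℝ × ℝ => Gp J (s, x)) = fun x => W1f J (s, x) + W2f J (s, x) :=
      funext fun x => Gp_eq hU hsphJ s x _ (hutcross s x)
    rw [hsum, integral_add (hIntW1 s) (hIntW2 s)]
    have hz1 : (∫ x : ℝ × ℝ, W1f J (s, x)) = 0 := by
      have hint : Integrable (fun x : ℝ × ℝ => W1f J (s, x))
          ((volume : Measure ℝ).prod (volume : Measure ℝ)) := by
        rw [← MeasureTheory.Measure.volume_eq_prod]; exact hIntW1 s
      calc (∫ x : ℝ × ℝ, W1f J (s, x))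
          = ∫ x : ℝ × ℝ, W1f J (s, x) ∂((volume : Measure ℝ).prod volume) := by
            rw [← MeasureTheory.Measure.volume_eq_prod]
        _ = ∫ y : ℝ, (∫ x₁ : ℝ, W1f J (s, (x₁, y))) := integral_prod_symm _ hint
        _ = 0 := by simp [hinner1 s]
    have hz2 : (∫ x : ℝ × ℝ, W2f J (s, x)) = 0 := by
      have hint : Integrable (fun x : ℝ × ℝ => W2f J (s, x))
          ((volume : Measure ℝ).prod (volume : Measure ℝ)) := by
        rw [← MeasureTheory.Measure.volume_eq_prod]; exact hIntW2 s
      calc (∫ x : ℝ × ℝ, W2f J (s, x))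
          = ∫ x : ℝ × ℝ, W2f J (s, x) ∂((volume : Measure ℝ).prod volume) := by
            rw [← MeasureTheory.Measure.volume_eq_prod]
        _ = ∫ x₁ : ℝ, (∫ y : ℝ, W2f J (s, (x₁, y))) := integral_prod _ hint
        _ = 0 := by simp [hinner2 s]
    rw [hz1, hz2, add_zero]
  -- derivative of the integral is zero
  have hQ' : ∀ t₀ : ℝ, HasDerivAt (fun s => ∫ x : ℝ × ℝ, vort (u s) x) 0 t₀ := by
    intro t₀
    obtain ⟨C, hC⟩ := ((isCompact_Icc (a := t₀ - 1) (b := t₀ + 1)).prod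
      (isCompact_closedBall (0 : ℝ × ℝ) R)).exists_bound_of_continuousOn
      (continuous_Gp hU).continuousOn
    have key := hasDerivAt_integral_of_dominated_loc_of_deriv_le
      (F := fun s (x : ℝ × ℝ) => vort (u s) x) (F' := fun s (x : ℝ × ℝ) => Gp J (s, x))
      (bound := Set.indicator (Metric.closedBall (0 : ℝ × ℝ) R) fun _ => C)
      (x₀ := t₀) (s := Metric.ball t₀ 1) (Metric.ball_mem_nhds t₀ one_pos)
      (Eventually.of_forall fun s => (hvort_cont s).aestronglyMeasurable)
      (hInt t₀)
      (((continuous_Gp hU).comp (continuous_const.prodMk continuous_id)).aestronglyMeasurable)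
      ?_ ?_ ?_
    · have h2 := key.2
      rw [hGzero t₀] at h2
      exact h2
    · refine Eventually.of_forall fun x s hs => ?_
      by_cases hx : x ∈ Metric.closedBall (0 : ℝ × ℝ) R
      · rw [Set.indicator_of_mem hx]
        refine hC (s, x) ⟨?_, hx⟩
        rw [Metric.mem_ball, Real.dist_eq] at hs
        constructor <;> [linarith [abs_lt.1 hs]; linarith [(abs_lt.1 hs).2]]
      · rw [Set.indicator_of_notMem hx]
        have hxO : x ∈ O := by
          apply hnorm_mem_O
          simpa [Metric.mem_closedBall, dist_zero_right, not_le] using hx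
        simp [hGp_0 s x hxO]
    · exact (MeasureTheory.integrableOn_const
        measure_closedBall_lt_top.ne).integrable_indicator measurableSet_closedBall
    · refine Eventually.of_forall fun x s _ => ?_
      exact hasDerivAt_vort_t hU s x
  -- conclude
  have hdiffI : Differentiable ℝ fun s => ∫ x : ℝ × ℝ, vort (u s) x :=
    fun s => (hQ' s).differentiableAt
  have hconst := is_const_of_deriv_eq_zero hdiffI (fun s => (hQ' s).deriv)
  intro t t'
  have := hconst t t'
  simp only [Qdeg]
  rw [this]
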